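/- arXiv:0912.3119 — 3 statements merged into one kernel-verified Lean document; each statement's English description precedes it below -/
import Mathlib

section
/- Let λ ≥ 1 and let G ⊂ S^{n×n} be a set of real symmetric n×n matrices satisfying the λ-cone condition. For a ∈ S^{n×n} write π(a) = a − (trace(a)/n)·I for its traceless part. Then the projection π is injective on G, and there is a constant C depending only on n and λ such that for all a, b ∈ G, |trace(a) − trace(b)| ≤ C·‖π(a) − π(b)‖; in particular G is the graph of a Lipschitz function of the traceless part. -/
noncomputable section

open Real Polynomial

attribute [local instance] Matrix.frobeniusNormedAddCommGroup Matrix.frobeniusNormedSpace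

/-- The λ-cone condition for a set `G` of symmetric matrices: for any two distinct
`a b ∈ G` there are `C > 0` and a symmetric positive definite matrix `c` all of whose
eigenvalues lie in `[C/λ, Cλ]` (expressed via its quadratic form) such that
`trace((a-b)·c) = 0`. -/
def ConeCondition (n : ℕ) (lam : ℝ) (G : Set (Matrix (Fin n) (Fin n) ℝ)) : Prop :=
  ∀ a ∈ G, ∀ b ∈ G, a ≠ b →
    ∃ (C : ℝ) (c : Matrix (Fin n) (Fin n) ℝ), 0 < C ∧ c.IsSymm ∧
      (∀ ξ : EuclideanSpace ℝ (Fin n),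
        C / lam * ‖ξ‖ ^ 2 ≤ (∑ i, ∑ j, c i j * ξ i * ξ j) ∧
        (∑ i, ∑ j, c i j * ξ i * ξ j) ≤ C * lam * ‖ξ‖ ^ 2) ∧
      Matrix.trace ((a - b) * c) = 0

/-- The norm associated with the inner product `a·b = trace(ab)` on symmetric matrices:
`‖X‖ = √(trace (X·Xᵀ))`. -/
def frobNorm {n : ℕ} (X : Matrix (Fin n) (Fin n) ℝ) : ℝ :=
  Real.sqrt (Matrix.trace (X * X.transpose))

/-! Let `d = a - b` and let `c` be the matrix supplied by the cone condition. Since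
`trace (d * c) = 0`, pairing `c` with the traceless part `π d = d - (trace d / n) • 1` gives
`trace (π d * c) = -(trace d / n) * trace c`. The quadratic-form bounds make the diagonal of `c`
at least `C / λ`, so `trace c ≥ n C / λ`, and all entries of `c` at most `C λ` in absolute value,
so `‖c‖ ≤ n C λ`. Cauchy–Schwarz for `trace` then yields `|trace d| ≤ n λ² ‖π d‖`. -/

open Matrix

section QuadForm

variable {ι : Type*} [Fintype ι] [DecidableEq ι]

def quadForm (c : Matrix ι ι ℝ) (ξ : EuclideanSpace ℝ ι) : ℝ :=
  ∑ i, ∑ j, c i j * ξ i * ξ j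

lemma quadForm_single (c : Matrix ι ι ℝ) (k : ι) :
    quadForm c (EuclideanSpace.single k 1) = c k k := by
  simp [quadForm]

lemma quadForm_single_add_single (c : Matrix ι ι ℝ) (k l : ι) (t : ℝ) :
    quadForm c (EuclideanSpace.single k 1 + EuclideanSpace.single l t) =
      c k k + t * (c k l + c l k) + t ^ 2 * c l l := by
  simp only [quadForm, PiLp.add_apply, PiLp.single_apply, mul_add, add_mul, mul_ite,
    ite_mul, mul_zero, zero_mul, mul_one, Finset.sum_add_distrib, Finset.sum_ite_eq',
    Finset.mem_univ, if_true]
  ring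

lemma norm_single_add_single_sq {k l : ι} (hkl : k ≠ l) (t : ℝ) :
    ‖EuclideanSpace.single k (1 : ℝ) + EuclideanSpace.single l t‖ ^ 2 = 1 + t ^ 2 := by
  rw [norm_add_sq_real]
  simp [EuclideanSpace.inner_single_left, hkl.symm]

lemma le_diag_of_le_quadForm {c : Matrix ι ι ℝ} {m : ℝ}
    (h : ∀ ξ, m * ‖ξ‖ ^ 2 ≤ quadForm c ξ) (k : ι) : m ≤ c k k := by
  simpa [quadForm_single] using h (EuclideanSpace.single k 1)

lemma diag_le_of_quadForm_le {c : Matrix ι ι ℝ} {M : ℝ}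
    (h : ∀ ξ, quadForm c ξ ≤ M * ‖ξ‖ ^ 2) (k : ι) : c k k ≤ M := by
  simpa [quadForm_single] using h (EuclideanSpace.single k 1)

/-- Testing the form on `e_k ± e_l` bounds the off-diagonal entries. -/
lemma abs_apply_le_of_quadForm_le {c : Matrix ι ι ℝ} (hc : c.IsSymm) {M : ℝ}
    (hdiag : ∀ k, 0 ≤ c k k) (h : ∀ ξ, quadForm c ξ ≤ M * ‖ξ‖ ^ 2) (k l : ι) :
    |c k l| ≤ M := by
  rcases eq_or_ne k l with rfl | hkl
  · rw [abs_of_nonneg (hdiag k)]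
    exact diag_le_of_quadForm_le h k
  have hsymm : c l k = c k l := hc.apply k l
  have hplus := h (EuclideanSpace.single k 1 + EuclideanSpace.single l 1)
  have hminus := h (EuclideanSpace.single k 1 + EuclideanSpace.single l (-1))
  rw [quadForm_single_add_single, norm_single_add_single_sq hkl, hsymm] at hplus hminus
  rw [abs_le]
  constructor <;> nlinarith [hdiag k, hdiag l]

end QuadForm

section Traceless

variable {n : ℕ}

def tracelessPart (a : Matrix (Fin n) (Fin n) ℝ) : Matrix (Fin n) (Fin n) ℝ :=
  a - (trace a / n) • 1

lemma tracelessPart_sub (a b : Matrix (Fin n) (Fin n) ℝ) :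
    tracelessPart (a - b) = tracelessPart a - tracelessPart b := by
  simp only [tracelessPart, trace_sub, sub_div, sub_smul]
  abel

lemma trace_tracelessPart_mul (d c : Matrix (Fin n) (Fin n) ℝ) :
    trace (tracelessPart d * c) = trace (d * c) - trace d / n * trace c := by
  simp [tracelessPart, sub_mul, trace_sub, trace_smul]

lemma eq_of_tracelessPart_eq {a b : Matrix (Fin n) (Fin n) ℝ}
    (h : tracelessPart a = tracelessPart b) (htr : trace a = trace b) : a = b := by
  simpa [tracelessPart, htr] using h

end Traceless

section FrobNorm

variable {n : ℕ}

lemma trace_mul_sq_le {m k : Type*} [Fintype m] [Fintype k] (X : Matrix m k ℝ)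
    (Y : Matrix k m ℝ) : trace (X * Y) ^ 2 ≤ trace (X * Xᵀ) * trace (Yᵀ * Y) := by
  simp only [trace, diag, mul_apply, transpose_apply, ← sq]
  simpa [Fintype.sum_prod_type] using
    Finset.sum_mul_sq_le_sq_mul_sq Finset.univ (fun p : m × k => X p.1 p.2) (fun p => Y p.2 p.1)

lemma trace_mul_transpose_self (X : Matrix (Fin n) (Fin n) ℝ) :
    trace (X * Xᵀ) = ∑ i, ∑ j, X i j ^ 2 := by
  simp [trace, mul_apply, sq]

lemma abs_trace_mul_le_frobNorm (X Y : Matrix (Fin n) (Fin n) ℝ) :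
    |trace (X * Y)| ≤ frobNorm X * frobNorm Y := by
  rw [frobNorm, frobNorm, ← Real.sqrt_mul (by rw [trace_mul_transpose_self]; positivity),
    trace_mul_comm Y]
  exact Real.abs_le_sqrt (trace_mul_sq_le X Y)

lemma frobNorm_zero : frobNorm (0 : Matrix (Fin n) (Fin n) ℝ) = 0 := by
  simp [frobNorm]

lemma frobNorm_le_of_abs_apply_le {c : Matrix (Fin n) (Fin n) ℝ} {M : ℝ} (hM : 0 ≤ M)
    (h : ∀ i j, |c i j| ≤ M) : frobNorm c ≤ n * M := by
  rw [frobNorm, trace_mul_transpose_self, Real.sqrt_le_iff]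
  refine ⟨by positivity, ?_⟩
  calc ∑ i, ∑ j, c i j ^ 2 ≤ ∑ _i : Fin n, ∑ _j : Fin n, M ^ 2 := by
        refine Finset.sum_le_sum fun i _ => Finset.sum_le_sum fun j _ => ?_
        exact sq_le_sq' (neg_le_of_abs_le (h i j)) (le_of_abs_le (h i j))
    _ = (n * M) ^ 2 := by
      simp only [Finset.sum_const, Finset.card_univ, Fintype.card_fin, nsmul_eq_mul]; ring

end FrobNorm

section ConeEstimate

variable {n : ℕ}

lemma abs_trace_mul_le_of_trace_mul_eq_zero {d c : Matrix (Fin n) (Fin n) ℝ} {m M : ℝ}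
    (hm : 0 ≤ m) (hdiag : ∀ k, m ≤ c k k) (hentry : ∀ i j, |c i j| ≤ M)
    (hdc : trace (d * c) = 0) :
    |trace d| * m ≤ n * M * frobNorm (tracelessPart d) := by
  rcases n.eq_zero_or_pos with rfl | hn
  · simp
  have hn' : (0 : ℝ) < n := Nat.cast_pos.mpr hn
  have hM : 0 ≤ M := (abs_nonneg _).trans (hentry ⟨0, hn⟩ ⟨0, hn⟩)
  have htrace : n * m ≤ trace c := by
    have := Finset.card_nsmul_le_sum Finset.univ (diag c) m fun k _ => hdiag k
    rwa [Finset.card_univ, Fintype.card_fin, nsmul_eq_mul] at this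
  calc |trace d| * m = |trace d| / n * (n * m) := by field_simp
    _ ≤ |trace d| / n * trace c := by gcongr
    _ = |trace (tracelessPart d * c)| := by
      rw [trace_tracelessPart_mul, hdc, zero_sub, abs_neg, abs_mul, abs_div, Nat.abs_cast,
        abs_of_nonneg (le_trans (by positivity) htrace)]
    _ ≤ frobNorm (tracelessPart d) * frobNorm c := abs_trace_mul_le_frobNorm _ _
    _ ≤ frobNorm (tracelessPart d) * (n * M) :=
      mul_le_mul_of_nonneg_left (frobNorm_le_of_abs_apply_le hM hentry) (Real.sqrt_nonneg _)
    _ = n * M * frobNorm (tracelessPart d) := by ring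

lemma abs_trace_le_of_trace_mul_eq_zero {lam C : ℝ} (hlam : 0 < lam) (hC : 0 < C)
    {d c : Matrix (Fin n) (Fin n) ℝ} (hc : c.IsSymm)
    (hq : ∀ ξ, C / lam * ‖ξ‖ ^ 2 ≤ quadForm c ξ ∧ quadForm c ξ ≤ C * lam * ‖ξ‖ ^ 2)
    (hdc : trace (d * c) = 0) :
    |trace d| ≤ n * lam ^ 2 * frobNorm (tracelessPart d) := by
  have hm : 0 < C / lam := div_pos hC hlam
  have hdiag := le_diag_of_le_quadForm fun ξ => (hq ξ).1
  have hentry := abs_apply_le_of_quadForm_le hc (fun k => hm.le.trans (hdiag k)) fun ξ => (hq ξ).2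
  refine le_of_mul_le_mul_right ?_ hm
  calc |trace d| * (C / lam) ≤ n * (C * lam) * frobNorm (tracelessPart d) :=
        abs_trace_mul_le_of_trace_mul_eq_zero hm.le hdiag hentry hdc
    _ = n * lam ^ 2 * frobNorm (tracelessPart d) * (C / lam) := by field_simp

end ConeEstimate

theorem stmt4 (n : ℕ) (lam : ℝ) (hlam : 1 ≤ lam) :
    ∃ C : ℝ, ∀ G : Set (Matrix (Fin n) (Fin n) ℝ),
      (∀ A ∈ G, A.IsSymm) → ConeCondition n lam G →
      Set.InjOn
        (fun a => a - (Matrix.trace a / (n : ℝ)) • (1 : Matrix (Fin n) (Fin n) ℝ)) G ∧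
      ∀ a ∈ G, ∀ b ∈ G,
        |Matrix.trace a - Matrix.trace b| ≤
          C * frobNorm ((a - (Matrix.trace a / (n : ℝ)) • (1 : Matrix (Fin n) (Fin n) ℝ)) -
            (b - (Matrix.trace b / (n : ℝ)) • (1 : Matrix (Fin n) (Fin n) ℝ))) := by
  refine ⟨n * lam ^ 2, fun G _ hcone => ?_⟩
  have hlip : ∀ a ∈ G, ∀ b ∈ G,
      |trace a - trace b| ≤ n * lam ^ 2 * frobNorm (tracelessPart a - tracelessPart b) := by
    intro a ha b hb
    rcases eq_or_ne a b with rfl | hab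
    · simp [frobNorm_zero]
    obtain ⟨C, c, hC, hc, hq, hdc⟩ := hcone a ha b hb hab
    rw [← trace_sub, ← tracelessPart_sub]
    exact abs_trace_le_of_trace_mul_eq_zero (by linarith) hC hc hq hdc
  refine ⟨fun a ha b hb hab => eq_of_tracelessPart_eq hab ?_, hlip⟩
  have hzero := hlip a ha b hb
  rw [show tracelessPart a = tracelessPart b from hab, sub_self, frobNorm_zero, mul_zero] at hzero
  exact sub_eq_zero.mp (abs_nonpos_iff.mp hzero)
end
end

section
/- For every s = (s₀,s₁,s₂,s₃) ∈ ℝ⁴: (1) M_s·M_sᵗ = M_sᵗ·M_s = ‖s‖²·I₄; (2) det(M_s) = −‖s‖⁴; (3) the characteristic polynomial of M_s equals (x² − ‖s‖²)(x² + 2s₀x + ‖s‖²). -/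
/-!
`M_s` is `diag(1, -1, -1, -1)` times the matrix of right multiplication by the quaternion
`s₀ + s₁i + s₂j + s₃k`, so both Gram products are `‖s‖² • 1` by multiplicativity of the quaternion
norm. The characteristic polynomial follows by cofactor expansion along the first row, and the
determinant is then read off from its constant coefficient.
-/

noncomputable section

open Real Polynomial

attribute [local instance] Matrix.frobeniusNormedAddCommGroup Matrix.frobeniusNormedSpace

/-- The 4×4 matrix M_s. -/
def Mmat (s : EuclideanSpace ℝ (Fin 4)) : Matrix (Fin 4) (Fin 4) ℝ :=
  !![s 0, -s 1, -s 2, -s 3;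
     -s 1, -s 0, -s 3, s 2;
     -s 2, s 3, -s 0, -s 1;
     -s 3, -s 2, s 1, -s 0]

section SignedQuatMatrix

open Matrix

variable {R : Type*} [CommRing R] (a b c d : R)

def signedQuatMatrix : Matrix (Fin 4) (Fin 4) R :=
  !![a, -b, -c, -d;
     -b, -a, -d, c;
     -c, d, -a, -b;
     -d, -c, b, -a]

theorem signedQuatMatrix_mul_transpose :
    signedQuatMatrix a b c d * (signedQuatMatrix a b c d)ᵀ =
      (a ^ 2 + b ^ 2 + c ^ 2 + d ^ 2) • 1 := by
  ext i j
  fin_cases i <;> fin_cases j <;>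
    simp [signedQuatMatrix, mul_apply, Fin.sum_univ_four] <;> ring

theorem signedQuatMatrix_transpose_mul :
    (signedQuatMatrix a b c d)ᵀ * signedQuatMatrix a b c d =
      (a ^ 2 + b ^ 2 + c ^ 2 + d ^ 2) • 1 := by
  ext i j
  fin_cases i <;> fin_cases j <;>
    simp [signedQuatMatrix, mul_apply, Fin.sum_univ_four] <;> ring

theorem signedQuatMatrix_charpoly :
    (signedQuatMatrix a b c d).charpoly =
      (X ^ 2 - C (a ^ 2 + b ^ 2 + c ^ 2 + d ^ 2)) *
        (X ^ 2 + C (2 * a) * X + C (a ^ 2 + b ^ 2 + c ^ 2 + d ^ 2)) := by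
  rw [charpoly, det_succ_row_zero]
  simp [Fin.sum_univ_succ, det_fin_three, signedQuatMatrix, charmatrix_apply, Fin.succAbove,
    map_ofNat]
  ring

theorem signedQuatMatrix_det :
    (signedQuatMatrix a b c d).det = -(a ^ 2 + b ^ 2 + c ^ 2 + d ^ 2) ^ 2 := by
  rw [det_eq_sign_charpoly_coeff, signedQuatMatrix_charpoly]
  simp [coeff_zero_eq_eval_zero]
  ring

end SignedQuatMatrix

theorem Mmat_eq_signedQuatMatrix (s : EuclideanSpace ℝ (Fin 4)) :
    Mmat s = signedQuatMatrix (s 0) (s 1) (s 2) (s 3) :=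
  rfl

theorem stmt7 (s : EuclideanSpace ℝ (Fin 4)) :
    Mmat s * (Mmat s).transpose = ‖s‖ ^ 2 • (1 : Matrix (Fin 4) (Fin 4) ℝ) ∧
    (Mmat s).transpose * Mmat s = ‖s‖ ^ 2 • (1 : Matrix (Fin 4) (Fin 4) ℝ) ∧
    (Mmat s).det = -(‖s‖ ^ 4) ∧
    (Mmat s).charpoly =
      (X ^ 2 - C (‖s‖ ^ 2)) * (X ^ 2 + C (2 * s 0) * X + C (‖s‖ ^ 2)) := by
  have hnorm : ‖s‖ ^ 2 = s 0 ^ 2 + s 1 ^ 2 + s 2 ^ 2 + s 3 ^ 2 := by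
    rw [EuclideanSpace.real_norm_sq_eq, Fin.sum_univ_four]
  rw [show ‖s‖ ^ 4 = (‖s‖ ^ 2) ^ 2 by ring, hnorm, Mmat_eq_signedQuatMatrix]
  exact ⟨signedQuatMatrix_mul_transpose _ _ _ _, signedQuatMatrix_transpose_mul _ _ _ _,
    signedQuatMatrix_det _ _ _ _, signedQuatMatrix_charpoly _ _ _ _⟩
end
end

section
/- Let m ∈ ℝ with |m| ≤ 1. Then the polynomial F_m(x) = x³ − 3x − 2m has three real roots x₁ ≥ x₂ ≥ x₃, and: (1) if 0 ≤ m ≤ 1 then √3 ≤ x₁ ≤ 2 and x₃ ≤ −1, and each of the equalities x₁ = 2 and x₃ = −1 implies m = 1; (2) if −1 ≤ m ≤ 0 then −2 ≤ x₃ ≤ −√3 and x₁ ≥ 1, and each of the equalities x₁ = 1 and x₃ = −2 implies m = −1; (3) if |m| ≤ 0.75 then |x₁| > 1.38 and |x₃| > 1.38. -/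
/-! The map `t ↦ t³ - 3t` is `-2` at `1` and `2` at `2`, so by the intermediate value
theorem it hits `2m` at some `t` and `-2m` at some `u` there. Then `t` and `-u` are two distinct
roots of `F_m`, the third is `u - t` because the roots sum to zero, and `t ≥ u - t ≥ -u` since
`t, u ∈ [1, 2]`. Every bound on `x₁ = t` and `x₃ = -u` is then a property of a root of
`t³ - 3t = 2m` in `[1, 2]`, applied to `m` or to `-m`. -/

theorem exists_cube_sub_three_mul_eq_of_abs_le {m : ℝ} (hm : |m| ≤ 1) :
    ∃ t ∈ Set.Icc (1 : ℝ) 2, t ^ 3 - 3 * t = 2 * m := by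
  have hcont : Continuous fun t : ℝ => t ^ 3 - 3 * t := by fun_prop
  obtain ⟨hm₁, hm₂⟩ := abs_le.mp hm
  exact intermediate_value_Icc (by norm_num) hcont.continuousOn
    ⟨by norm_num; linarith, by norm_num; linarith⟩

theorem cube_sub_three_mul_sub_eq_mul {a b c m : ℝ} (hab : a ≠ b)
    (ha : a ^ 3 - 3 * a = 2 * m) (hb : b ^ 3 - 3 * b = 2 * m) (habc : a + b + c = 0) (x : ℝ) :
    x ^ 3 - 3 * x - 2 * m = (x - a) * (x - c) * (x - b) := by
  have hsq : a ^ 2 + a * b + b ^ 2 = 3 := by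
    have h : (a - b) * (a ^ 2 + a * b + b ^ 2 - 3) = 0 := by linear_combination ha - hb
    linarith [(mul_eq_zero.mp h).resolve_left (sub_ne_zero.mpr hab)]
  obtain rfl : c = -a - b := by linarith
  linear_combination (x - a) * hsq + ha

theorem sqrt_three_le_of_cube_sub_three_mul_eq {m t : ℝ} (ht : 0 < t)
    (h : t ^ 3 - 3 * t = 2 * m) (hm : 0 ≤ m) : √3 ≤ t := by
  have hprod : 0 ≤ t * (t ^ 2 - 3) := by
    linarith [show t * (t ^ 2 - 3) = 2 * m by linear_combination h]
  rw [Real.sqrt_le_left ht.le]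
  linarith [nonneg_of_mul_nonneg_right hprod ht]

/-- `1.38³ - 3 · 1.38 < -1.5`, and `t ↦ t³ - 3t` increases on `[1, ∞)`. -/
theorem lt_of_cube_sub_three_mul_eq {m t : ℝ} (ht : 1 ≤ t)
    (h : t ^ 3 - 3 * t = 2 * m) (hm : -0.75 ≤ m) : 1.38 < t := by
  by_contra! hlt
  nlinarith [mul_nonneg (sub_nonneg.mpr hlt) (sub_nonneg.mpr ht)]

theorem stmt15 (m : ℝ) (hm : |m| ≤ 1) :
    ∃ x₁ x₂ x₃ : ℝ, x₂ ≤ x₁ ∧ x₃ ≤ x₂ ∧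
      (∀ x : ℝ, x ^ 3 - 3 * x - 2 * m = (x - x₁) * (x - x₂) * (x - x₃)) ∧
      (0 ≤ m → Real.sqrt 3 ≤ x₁ ∧ x₁ ≤ 2 ∧ x₃ ≤ -1 ∧
        (x₁ = 2 → m = 1) ∧ (x₃ = -1 → m = 1)) ∧
      (m ≤ 0 → -2 ≤ x₃ ∧ x₃ ≤ -Real.sqrt 3 ∧ 1 ≤ x₁ ∧
        (x₁ = 1 → m = -1) ∧ (x₃ = -2 → m = -1)) ∧
      (|m| ≤ 0.75 → 1.38 < |x₁| ∧ 1.38 < |x₃|) := by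
  obtain ⟨t, ⟨ht₁, ht₂⟩, ht⟩ := exists_cube_sub_three_mul_eq_of_abs_le hm
  obtain ⟨u, ⟨hu₁, hu₂⟩, hu⟩ := exists_cube_sub_three_mul_eq_of_abs_le (m := -m) (by rwa [abs_neg])
  have hroot₃ : (-u) ^ 3 - 3 * (-u) = 2 * m := by linear_combination -hu
  refine ⟨t, u - t, -u, by linarith, by linarith,
    cube_sub_three_mul_sub_eq_mul (by linarith) ht hroot₃ (by ring), fun hm₀ => ?_,
    fun hm₀ => ?_, fun hm₃ => ?_⟩
  · refine ⟨sqrt_three_le_of_cube_sub_three_mul_eq (by linarith) ht hm₀, ht₂, by linarith,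
      fun h => ?_, fun h => ?_⟩
    · subst h; linarith
    · obtain rfl : u = 1 := by linarith
      linarith
  · refine ⟨by linarith, ?_, ht₁, fun h => ?_, fun h => ?_⟩
    · linarith [sqrt_three_le_of_cube_sub_three_mul_eq (by linarith) hu (neg_nonneg.mpr hm₀)]
    · subst h; linarith
    · obtain rfl : u = 2 := by linarith
      linarith
  · obtain ⟨hm₃₁, hm₃₂⟩ := abs_le.mp hm₃
    rw [abs_of_pos (by linarith), abs_neg, abs_of_pos (by linarith)]
    exact ⟨lt_of_cube_sub_three_mul_eq ht₁ ht hm₃₁,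
      lt_of_cube_sub_three_mul_eq hu₁ hu (by linarith)⟩
end
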